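/- In a market with strong gross substitutes valuations, the componentwise maximal covering price vector exists and equals the maximal Walrasian price vector p^*: every covering price vector q satisfies q ≤ p^* componentwise. -/

import Mathlib

open Finset

variable {E : Type*} [Fintype E] [DecidableEq E]

/-- Characteristic (unit) vector of an item. -/
def chi (e : E) : E → ℤ := fun f => if f = e then 1 else 0

/-- The integer box `[0, b]_ℤ` of bundles. -/
def Box (b : E → ℤ) : Set (E → ℤ) := {z | ∀ e, 0 ≤ z e ∧ z e ≤ b e}

/-- Quasi-linear utility of a bundle at prices `p`. -/
noncomputable def util (v : (E → ℤ) → ℤ) (p : E → ℝ) (z : E → ℤ) : ℝ :=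
  (v z : ℝ) - ∑ e : E, p e * (z e : ℝ)

/-- Demand set: utility-maximizing bundles in the box. -/
def Demand (b : E → ℤ) (v : (E → ℤ) → ℤ) (p : E → ℝ) : Set (E → ℤ) :=
  {z | z ∈ Box b ∧ ∀ y ∈ Box b, util v p y ≤ util v p z}

/-- Componentwise minimal preferred bundles. -/
def MinDemand (b : E → ℤ) (v : (E → ℤ) → ℤ) (p : E → ℝ) : Set (E → ℤ) :=
  {z | z ∈ Demand b v p ∧ ∀ y ∈ Demand b v p, y ≤ z → y = z}

/-- Componentwise maximal preferred bundles. -/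
def MaxDemand (b : E → ℤ) (v : (E → ℤ) → ℤ) (p : E → ℝ) : Set (E → ℤ) :=
  {z | z ∈ Demand b v p ∧ ∀ y ∈ Demand b v p, z ≤ y → y = z}

/-- M♮-concavity, equivalent to the strong gross substitutes property. -/
def MNatConcave (b : E → ℤ) (v : (E → ℤ) → ℤ) : Prop :=
  ∀ x ∈ Box b, ∀ y ∈ Box b, ∀ e : E, y e < x e →
    v x + v y ≤ v (x - chi e) + v (y + chi e) ∨
    ∃ f : E, x f < y f ∧ v x + v y ≤ v (x - chi e + chi f) + v (y + chi e - chi f)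

/-- M-convex set: exchange property. -/
def MConvex (B : Set (E → ℤ)) : Prop :=
  ∀ x ∈ B, ∀ y ∈ B, ∀ e : E, y e < x e →
    ∃ f : E, x f < y f ∧ x - chi e + chi f ∈ B ∧ y + chi e - chi f ∈ B

/-- `ρ` is the rank function of `B`: `ρ S = max {z(S) : z ∈ B}`. -/
def IsRank (B : Set (E → ℤ)) (ρ : Finset E → ℤ) : Prop :=
  ∀ S : Finset E, IsGreatest ((fun z : E → ℤ => ∑ e ∈ S, z e) '' B) (ρ S)

/-- Prices `p` are packing: a choice of preferred bundles oversells no item. -/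
def Packing {N : Type*} [Fintype N] (b : E → ℤ) (v : N → (E → ℤ) → ℤ) (p : E → ℝ) : Prop :=
  ∃ z : N → E → ℤ, (∀ i, z i ∈ Demand b (v i) p) ∧ ∀ e, ∑ i, z i e ≤ b e

/-- Prices `p` are covering: a choice of preferred bundles sells all items. -/
def Covering {N : Type*} [Fintype N] (b : E → ℤ) (v : N → (E → ℤ) → ℤ) (p : E → ℝ) : Prop :=
  ∃ z : N → E → ℤ, (∀ i, z i ∈ Demand b (v i) p) ∧ ∀ e, b e ≤ ∑ i, z i e

/-- Prices `p` are Walrasian: a choice of preferred bundles exactly exhausts the supply. -/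
def Walrasian {N : Type*} [Fintype N] (b : E → ℤ) (v : N → (E → ℤ) → ℤ) (p : E → ℝ) : Prop :=
  ∃ z : N → E → ℤ, (∀ i, z i ∈ Demand b (v i) p) ∧ ∀ e, ∑ i, z i e = b e
/-!
Raise the covering prices `q` to `p = q ⊔ p*`. Prices rise only outside `S = {q > p*}`, so by
the monotonicity of M♮-concave demand every buyer has a bundle demanded at `p` that dominates
his covering bundle on `S`; hence demand at `p` still covers every item whose price exceeds
`p*`. Comparing with the Walrasian allocation `y` at `p*`, the total gain of switching from `y`
to these bundles at prices `p` is at most `∑ₑ (p - p*)(b - ∑ᵢ zᵢ) ≤ 0`, so each `yᵢ` is still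
demanded at `p`. Thus `p` is Walrasian, and `q ≤ p ≤ p*`.
-/

omit [Fintype E] [DecidableEq E] in
theorem box_eq_Icc (b : E → ℤ) : Box b = Set.Icc 0 b := by
  ext z
  simp only [Box, Set.mem_ofPred_eq, Set.mem_Icc, Pi.le_def, Pi.zero_apply, forall_and]

theorem demand_nonempty {b : E → ℤ} (hb : 0 ≤ b) (v : (E → ℤ) → ℤ) (p : E → ℝ) :
    (Demand b v p).Nonempty := by
  obtain ⟨z, hz, hmax⟩ := Set.exists_max_image (Box b) (util v p)
    (box_eq_Icc b ▸ Set.finite_Icc 0 b) ⟨0, box_eq_Icc b ▸ Set.left_mem_Icc.2 hb⟩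
  exact ⟨z, hz, hmax⟩

section

omit [DecidableEq E]

theorem util_sub_util (v : (E → ℤ) → ℤ) (p p' : E → ℝ) (z y : E → ℤ) :
    util v p z - util v p y =
      util v p' z - util v p' y - ∑ e, (p e - p' e) * ((z e : ℝ) - y e) := by
  simp only [util, mul_sub, sub_mul, sum_sub_distrib]
  ring

theorem util_add_util_le_of_exchange {v : (E → ℤ) → ℤ} {p p' : E → ℝ} {x y d : E → ℤ}
    (hv : v x + v y ≤ v (x - d) + v (y + d)) (hd : ∑ e, (p' e - p e) * (d e : ℝ) ≤ 0) :
    util v p x + util v p' y ≤ util v p (x - d) + util v p' (y + d) := by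
  have hv' : (v x : ℝ) + v y ≤ v (x - d) + v (y + d) := by exact_mod_cast hv
  simp only [util, Pi.add_apply, Pi.sub_apply, Int.cast_add, Int.cast_sub, mul_add, mul_sub,
    sub_mul, sum_add_distrib, sum_sub_distrib] at hd ⊢
  linarith

theorem add_mem_demand_of_exchange {b : E → ℤ} {v : (E → ℤ) → ℤ} {p p' : E → ℝ}
    {x y d : E → ℤ} (hx : x ∈ Demand b v p) (hy : y ∈ Demand b v p') (hxd : x - d ∈ Box b)
    (hyd : y + d ∈ Box b) (hv : v x + v y ≤ v (x - d) + v (y + d))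
    (hd : ∑ e, (p' e - p e) * (d e : ℝ) ≤ 0) :
    y + d ∈ Demand b v p' := by
  have hgain := util_add_util_le_of_exchange (p := p) hv hd
  have hloss := hx.2 _ hxd
  exact ⟨hyd, fun w hw => (hy.2 w hw).trans (by linarith)⟩

theorem mem_demand_of_walrasian_of_covers {N : Type*} [Fintype N] {b : E → ℤ}
    {v : N → (E → ℤ) → ℤ} {pstar p : E → ℝ} (hp : pstar ≤ p) {y z : N → E → ℤ}
    (hy : ∀ i, y i ∈ Demand b (v i) pstar) (hyb : ∀ e, ∑ i, y i e = b e)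
    (hz : ∀ i, z i ∈ Demand b (v i) p) (hzb : ∀ e, pstar e < p e → b e ≤ ∑ i, z i e) (i : N) :
    y i ∈ Demand b (v i) p := by
  have hgain : ∀ j ∈ univ, 0 ≤ util (v j) p (z j) - util (v j) p (y j) :=
    fun j _ => sub_nonneg.2 ((hz j).2 _ (hy j).1)
  have hcost : ∀ e, 0 ≤ (p e - pstar e) * (∑ j, (z j e : ℝ) - b e) := by
    intro e
    rcases (hp e).lt_or_eq with hlt | heq
    · refine mul_nonneg (sub_nonneg.2 hlt.le) (sub_nonneg.2 ?_)
      exact_mod_cast hzb e hlt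
    · simp [heq]
  have htotal : ∑ j, (util (v j) p (z j) - util (v j) p (y j)) ≤ 0 := calc
    _ = ∑ j, (util (v j) pstar (z j) - util (v j) pstar (y j)) -
          ∑ e, (p e - pstar e) * (∑ j, (z j e : ℝ) - ∑ j, (y j e : ℝ)) := by
        simp only [util_sub_util _ p pstar, sum_sub_distrib]
        rw [sum_comm]
        simp only [← sum_sub_distrib, mul_sum]
    _ = ∑ j, (util (v j) pstar (z j) - util (v j) pstar (y j)) -
          ∑ e, (p e - pstar e) * (∑ j, (z j e : ℝ) - b e) := by
        simp only [← hyb, Int.cast_sum]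
    _ ≤ 0 := by
        have := sum_nonneg fun e (_ : e ∈ univ) => hcost e
        have := sum_nonpos fun j (_ : j ∈ univ) => sub_nonpos.2 ((hy j).2 _ (hz j).1)
        linarith
  have hi := (sum_eq_zero_iff_of_nonneg hgain).1 (le_antisymm htotal (sum_nonneg hgain)) i
    (mem_univ i)
  exact ⟨(hy i).1, fun w hw => ((hz i).2 w hw).trans (by linarith)⟩

end

section

omit [Fintype E]

/-- The unit moves `d` that M♮-concavity offers when `y e < x e`: `d = χₑ` or `d = χₑ - χ_f`
with `x f < y f`. -/
def IsExchangeStep (x y : E → ℤ) (e : E) (d : E → ℤ) : Prop :=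
  y e < x e ∧ d e = 1 ∧ ∀ g ≠ e, d g = 0 ∨ (d g = -1 ∧ x g < y g)

namespace IsExchangeStep

variable {x y d : E → ℤ} {e : E}

theorem apply_cases (hd : IsExchangeStep x y e d) (g : E) :
    d g = 0 ∨ (d g = 1 ∧ y g < x g) ∨ (d g = -1 ∧ x g < y g) := by
  obtain ⟨he, hde, hd⟩ := hd
  by_cases hg : g = e
  · exact Or.inr (Or.inl (hg ▸ ⟨hde, he⟩))
  · exact (hd g hg).imp_right Or.inr

theorem sub_mem_box {b : E → ℤ} (hd : IsExchangeStep x y e d) (hx : x ∈ Box b)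
    (hy : y ∈ Box b) : x - d ∈ Box b := by
  intro g
  have := hx g
  have := hy g
  rcases hd.apply_cases g with h | h | h <;> simp only [Pi.sub_apply] <;> omega

theorem add_mem_box {b : E → ℤ} (hd : IsExchangeStep x y e d) (hx : x ∈ Box b)
    (hy : y ∈ Box b) : y + d ∈ Box b := by
  intro g
  have := hx g
  have := hy g
  rcases hd.apply_cases g with h | h | h <;> simp only [Pi.add_apply] <;> omega

theorem sum_toNat_lt (hd : IsExchangeStep x y e d) {S : Finset E} (he : e ∈ S) :
    ∑ g ∈ S, (x g - (y + d) g).toNat < ∑ g ∈ S, (x g - y g).toNat := by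
  refine sum_lt_sum (fun g _ => ?_) ⟨e, he, ?_⟩
  · rcases hd.apply_cases g with h | h | h <;> simp only [Pi.add_apply] <;> omega
  · have := hd.1
    have := hd.2.1
    simp only [Pi.add_apply]
    omega

end IsExchangeStep

theorem MNatConcave.exists_exchangeStep {b : E → ℤ} {v : (E → ℤ) → ℤ} (hv : MNatConcave b v)
    {x y : E → ℤ} (hx : x ∈ Box b) (hy : y ∈ Box b) {e : E} (he : y e < x e) :
    ∃ d, IsExchangeStep x y e d ∧ v x + v y ≤ v (x - d) + v (y + d) := by
  rcases hv x hx y hy e he with h | ⟨f, hf, h⟩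
  · exact ⟨chi e, ⟨he, by simp [chi], fun g hg => Or.inl (by simp [chi, hg])⟩, h⟩
  · have hfe : f ≠ e := by rintro rfl; omega
    refine ⟨chi e - chi f, ⟨he, by simp [chi, hfe.symm], fun g hg => ?_⟩, ?_⟩
    · by_cases hgf : g = f
      · subst hgf
        exact Or.inr ⟨by simp [chi, hg], hf⟩
      · exact Or.inl (by simp [chi, hg, hgf])
    · rwa [sub_sub_eq_add_sub, ← add_sub_assoc, add_sub_right_comm]

end

theorem IsExchangeStep.sum_mul_nonpos {x y d : E → ℤ} {e : E} (hd : IsExchangeStep x y e d)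
    {p p' : E → ℝ} (hpp' : p ≤ p') (hpe : p e = p' e) : ∑ g, (p' g - p g) * (d g : ℝ) ≤ 0 := by
  refine sum_nonpos fun g _ => ?_
  by_cases hg : g = e
  · simp [hg, hpe]
  · have hdg : (d g : ℝ) ≤ 0 := by
      rcases hd.2.2 g hg with h | ⟨h, -⟩ <;> simp [h]
    exact mul_nonpos_of_nonneg_of_nonpos (sub_nonneg.2 (hpp' g)) hdg

/-- Exchange steps from `x` toward a bundle `y` demanded at `p'` keep it demanded at `p'` and
decrease the deficiency `∑_{g ∈ S} (x g - y g)⁺` until `y` dominates `x` on `S`. -/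
theorem exists_mem_demand_ge_on {b : E → ℤ} {v : (E → ℤ) → ℤ} (hv : MNatConcave b v)
    {p p' : E → ℝ} (hpp' : p ≤ p') {S : Finset E} (hS : Set.EqOn p p' S) {x : E → ℤ}
    (hx : x ∈ Demand b v p) (hne : (Demand b v p').Nonempty) :
    ∃ x' ∈ Demand b v p', ∀ e ∈ S, x e ≤ x' e := by
  obtain ⟨y, hy⟩ := hne
  induction hn : ∑ g ∈ S, (x g - y g).toNat using Nat.strong_induction_on generalizing y with
  | _ n ih =>
  by_cases hxy : ∀ e ∈ S, x e ≤ y e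
  · exact ⟨y, hy, hxy⟩
  push Not at hxy
  obtain ⟨e, heS, he⟩ := hxy
  obtain ⟨d, hd, hvd⟩ := hv.exists_exchangeStep hx.1 hy.1 he
  have hyd : y + d ∈ Demand b v p' :=
    add_mem_demand_of_exchange hx hy (hd.sub_mem_box hx.1 hy.1) (hd.add_mem_box hx.1 hy.1) hvd
      (hd.sum_mul_nonpos hpp' (hS heS))
  exact ih _ (hn ▸ hd.sum_toNat_lt heS) (y + d) hyd rfl

theorem stmt17_general {N : Type*} [Fintype N] (b : E → ℤ) (hb : 0 ≤ b)
    (v : N → (E → ℤ) → ℤ) (hsgs : ∀ i, MNatConcave b (v i))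
    (pstar : E → ℝ)
    (hW : Walrasian b v pstar)
    (hmax : ∀ p : E → ℝ, 0 ≤ p → Walrasian b v p → p ≤ pstar)
    (q : E → ℝ) (hq : 0 ≤ q) (hcov : Covering b v q) :
    q ≤ pstar := by
  obtain ⟨y, hy, hyb⟩ := hW
  obtain ⟨x, hx, hxb⟩ := hcov
  set S := univ.filter fun e => pstar e < q e
  have hqS : Set.EqOn q (q ⊔ pstar) S := fun e he =>
    (max_eq_left (mem_filter.1 he).2.le).symm
  choose z hz hzx using fun i =>
    exists_mem_demand_ge_on (hsgs i) le_sup_left hqS (hx i) (demand_nonempty hb _ _)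
  have hzb : ∀ e, pstar e < (q ⊔ pstar) e → b e ≤ ∑ i, z i e := fun e he =>
    have heS : e ∈ S := mem_filter.2 ⟨mem_univ e, lt_sup_iff.1 he |>.resolve_right (lt_irrefl _)⟩
    (hxb e).trans (sum_le_sum fun i _ => hzx i e heS)
  have hWp : Walrasian b v (q ⊔ pstar) :=
    ⟨y, mem_demand_of_walrasian_of_covers le_sup_right hy hyb hz hzb, hyb⟩
  exact le_sup_left.trans (hmax _ (hq.trans le_sup_left) hWp)

/-- The componentwise maximal covering price vector equals the maximal Walrasian
price vector: every covering price vector is dominated by `p^*` componentwise. -/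
theorem stmt17 {N : Type*} [Fintype N] (b : E → ℤ) (hb : 0 ≤ b)
    (v : N → (E → ℤ) → ℤ) (hsgs : ∀ i, MNatConcave b (v i))
    (hmono : ∀ i, ∀ x ∈ Box b, ∀ y ∈ Box b, x ≤ y → v i x ≤ v i y)
    (pstar : E → ℝ) (hps : 0 ≤ pstar)
    (hW : Walrasian b v pstar)
    (hmax : ∀ p : E → ℝ, 0 ≤ p → Walrasian b v p → p ≤ pstar)
    (q : E → ℝ) (hq : 0 ≤ q) (hcov : Covering b v q) :
    q ≤ pstar :=
  stmt17_general b hb v hsgs pstar hW hmax q hq hcov
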